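/- Let N, d ≥ 1. Let f : ℝ^d → ℝ^d be odd and one-sided Lipschitz with constant L_f ∈ ℝ, and let u be such that x ↦ u(x, μ) is one-sided Lipschitz with constant L_u ∈ ℝ for every probability measure μ and u is Lipschitz along empirical measures with constant L_ũ ≥ 0. Set Γ₂ := 4 L_f⁺ + 2 L_u + L_ũ + 1 with L_f⁺ := max{L_f, 0}, and let h > 0 satisfy Γ₂ h < 1. If (X, Y) and (X', Y') are implicit Euler step pairs in (ℝ^d)^N × (ℝ^d)^N, then ∑_{i=1}^N |Y_i − Y'_i|² ≤ ∑_{i=1}^N |X_i − X'_i|² / (1 − Γ₂ h). Equivalently, the map sending the input X of the implicit Euler step to its solution Y is globally Lipschitz on (ℝ^d)^N with Lipschitz constant (1 − Γ₂ h)^{−1/2}. -/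

import Mathlib

/-!
Write `eᵢ = Yᵢ − Y'ᵢ` and `δᵢ = Xᵢ − X'ᵢ`. Subtracting the two implicit equations and pairing
with `eᵢ` gives `∑ ‖eᵢ‖² = ∑ ⟪eᵢ, δᵢ⟫ + h ∑ ⟪eᵢ, vᵢ − v'ᵢ⟫`. The drift is one-sided Lipschitz on
`(ℝ^d)^N` with constant `2L_f⁺ + L_u + L_ũ/2 + 1/2`: the `u`-part by the two hypotheses on `u` and
Young's inequality, the interaction part because oddness of `f` lets one symmetrize the double
sum over pairs `(i, j)`, turning it into `L_f`-one-sided-Lipschitz terms in `eᵢ − eⱼ`. Young's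
inequality on `∑ ⟪eᵢ, δᵢ⟫` then leaves `(1 − Γ₂ h) ∑ ‖eᵢ‖² ≤ ∑ ‖δᵢ‖²`.
-/

open RealInnerProductSpace MeasureTheory

/-- The empirical measure `μ^a := (1/N) ∑_{j=1}^N δ_{a_j}` of an `N`-tuple of points. -/
noncomputable def empMeas {d N : ℕ} (a : Fin N → EuclideanSpace ℝ (Fin d)) :
    Measure (EuclideanSpace ℝ (Fin d)) :=
  (N : ENNReal)⁻¹ • ∑ j, Measure.dirac (a j)

/-- The interaction drift `v` evaluated along an empirical measure:
`v(x, μ^a) = u(x, μ^a) + (1/N) ∑_j f(x − a_j)`. -/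
noncomputable def vEmp {d N : ℕ}
    (f : EuclideanSpace ℝ (Fin d) → EuclideanSpace ℝ (Fin d))
    (u : EuclideanSpace ℝ (Fin d) → Measure (EuclideanSpace ℝ (Fin d)) →
      EuclideanSpace ℝ (Fin d))
    (x : EuclideanSpace ℝ (Fin d)) (a : Fin N → EuclideanSpace ℝ (Fin d)) :
    EuclideanSpace ℝ (Fin d) :=
  u x (empMeas a) + (N : ℝ)⁻¹ • ∑ j, f (x - a j)

/-- `(X, Y)` is an implicit Euler step pair with step size `h` if
`Yᵢ = Xᵢ + h·v(Yᵢ, μ^Y)` for every `i`. -/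
def IsImplicitPair {d N : ℕ}
    (f : EuclideanSpace ℝ (Fin d) → EuclideanSpace ℝ (Fin d))
    (u : EuclideanSpace ℝ (Fin d) → Measure (EuclideanSpace ℝ (Fin d)) →
      EuclideanSpace ℝ (Fin d))
    (h : ℝ) (X Y : Fin N → EuclideanSpace ℝ (Fin d)) : Prop :=
  ∀ i, Y i = X i + h • vEmp f u (Y i) Y

open Finset

theorem norm_sub_sq_le_two_mul {E : Type*} [SeminormedAddCommGroup E] (x y : E) :
    ‖x - y‖ ^ 2 ≤ 2 * (‖x‖ ^ 2 + ‖y‖ ^ 2) :=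
  (pow_le_pow_left₀ (norm_nonneg _) (norm_sub_le x y) 2).trans add_sq_le

section InnerProductSpace

variable {E : Type*} [NormedAddCommGroup E] [InnerProductSpace ℝ E] {ι : Type*} [Fintype ι]

def OneSidedLipschitzWith (L : ℝ) (g : E → E) : Prop :=
  ∀ x x', ⟪x - x', g x - g x'⟫ ≤ L * ‖x - x'‖ ^ 2

theorem real_inner_le_half_sq_add_half_sq (x y : E) : ⟪x, y⟫ ≤ ‖x‖ ^ 2 / 2 + ‖y‖ ^ 2 / 2 := by
  linarith [real_inner_le_norm x y, two_mul_le_add_sq ‖x‖ ‖y‖]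

theorem sum_inner_le_half_sum_sq_add_half_sum_sq (a b : ι → E) :
    ∑ i, ⟪a i, b i⟫ ≤ (∑ i, ‖a i‖ ^ 2) / 2 + (∑ i, ‖b i‖ ^ 2) / 2 := by
  simp only [sum_div, ← sum_add_distrib]
  exact sum_le_sum fun i _ ↦ real_inner_le_half_sq_add_half_sq (a i) (b i)

theorem norm_sub_sq_eq_of_eq_add_smul {x x' y y' v v' : E} {h : ℝ}
    (hy : y = x + h • v) (hy' : y' = x' + h • v') :
    ‖y - y'‖ ^ 2 = ⟪y - y', x - x'⟫ + h * ⟪y - y', v - v'⟫ := by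
  have hdiff : y - y' = (x - x') + h • (v - v') := by
    rw [hy, hy', smul_sub]; abel
  rw [← real_inner_self_eq_norm_sq]
  nth_rw 2 [hdiff]
  rw [inner_add_right, real_inner_smul_right]

namespace OneSidedLipschitzWith

variable {L : ℝ} {f : E → E}

theorem sum_inner_le (hf : OneSidedLipschitzWith L f) (y y' : ι → E) :
    ∑ i, ⟪y i - y' i, f (y i) - f (y' i)⟫ ≤ L * ∑ i, ‖y i - y' i‖ ^ 2 := by
  rw [mul_sum]
  exact sum_le_sum fun i _ ↦ hf _ _

/-- By oddness the two terms combine into one increment of `f` paired with `(p - p') - (q - q')`. -/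
theorem inner_add_inner_swap_le (hf : OneSidedLipschitzWith L f) (hodd : ∀ z, f (-z) = -f z)
    (p p' q q' : E) :
    ⟪p - p', f (p - q) - f (p' - q')⟫ + ⟪q - q', f (q - p) - f (q' - p')⟫ ≤
      max L 0 * (2 * (‖p - p'‖ ^ 2 + ‖q - q'‖ ^ 2)) := by
  have hswap : f (q - p) - f (q' - p') = -(f (p - q) - f (p' - q')) := by
    rw [← neg_sub p q, ← neg_sub p' q', hodd, hodd]; abel
  have hpair : (p - q) - (p' - q') = (p - p') - (q - q') := by abel
  calc ⟪p - p', f (p - q) - f (p' - q')⟫ + ⟪q - q', f (q - p) - f (q' - p')⟫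
      = ⟪(p - q) - (p' - q'), f (p - q) - f (p' - q')⟫ := by
        rw [hswap, inner_neg_right, ← sub_eq_add_neg, ← inner_sub_left, hpair]
    _ ≤ L * ‖(p - p') - (q - q')‖ ^ 2 := by rw [← hpair]; exact hf _ _
    _ ≤ max L 0 * ‖(p - p') - (q - q')‖ ^ 2 := by gcongr; exact le_max_left _ _
    _ ≤ max L 0 * (2 * (‖p - p'‖ ^ 2 + ‖q - q'‖ ^ 2)) := by
        gcongr; exact norm_sub_sq_le_two_mul _ _

theorem sum_sum_inner_le (hf : OneSidedLipschitzWith L f) (hodd : ∀ z, f (-z) = -f z)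
    (y y' : ι → E) :
    ∑ i, ∑ j, ⟪y i - y' i, f (y i - y j) - f (y' i - y' j)⟫ ≤
      2 * max L 0 * Fintype.card ι * ∑ i, ‖y i - y' i‖ ^ 2 := by
  set T := ∑ i, ∑ j, ⟪y i - y' i, f (y i - y j) - f (y' i - y' j)⟫
  have hsymm : 2 * T = ∑ i, ∑ j, (⟪y i - y' i, f (y i - y j) - f (y' i - y' j)⟫ +
      ⟪y j - y' j, f (y j - y i) - f (y' j - y' i)⟫) := by
    simp only [sum_add_distrib]
    rw [sum_comm (f := fun i j ↦ ⟪y j - y' j, _⟫)]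
    ring
  have hbound : 2 * T ≤ ∑ i, ∑ j, max L 0 * (2 * (‖y i - y' i‖ ^ 2 + ‖y j - y' j‖ ^ 2)) := by
    rw [hsymm]
    exact sum_le_sum fun i _ ↦ sum_le_sum fun j _ ↦ hf.inner_add_inner_swap_le hodd _ _ _ _
  simp only [← mul_sum, sum_add_distrib, sum_const, card_univ, nsmul_eq_mul] at hbound
  linarith

theorem sum_inner_smul_sum_le [Nonempty ι] (hf : OneSidedLipschitzWith L f)
    (hodd : ∀ z, f (-z) = -f z) (y y' : ι → E) :
    ∑ i, ⟪y i - y' i, (Fintype.card ι : ℝ)⁻¹ • ∑ j, (f (y i - y j) - f (y' i - y' j))⟫ ≤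
      2 * max L 0 * ∑ i, ‖y i - y' i‖ ^ 2 := by
  have hcard : (0 : ℝ) < Fintype.card ι := by exact_mod_cast Fintype.card_pos
  simp only [real_inner_smul_right, inner_sum, ← mul_sum]
  rw [inv_mul_le_iff₀ hcard]
  linarith [hf.sum_sum_inner_le hodd y y']

end OneSidedLipschitzWith

end InnerProductSpace

section EmpiricalMeasure

variable {d N : ℕ}

theorem isProbabilityMeasure_empMeas (hN : N ≠ 0) (a : Fin N → EuclideanSpace ℝ (Fin d)) :
    IsProbabilityMeasure (empMeas a) := by
  constructor
  have hN' : (N : ENNReal) ≠ 0 := by exact_mod_cast hN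
  simp [empMeas, Measure.finsetSum_apply, ENNReal.inv_mul_cancel hN']

variable {f : EuclideanSpace ℝ (Fin d) → EuclideanSpace ℝ (Fin d)}
  {u : EuclideanSpace ℝ (Fin d) → Measure (EuclideanSpace ℝ (Fin d)) →
    EuclideanSpace ℝ (Fin d)}

theorem vEmp_sub_vEmp (x x' : EuclideanSpace ℝ (Fin d))
    (a a' : Fin N → EuclideanSpace ℝ (Fin d)) :
    vEmp f u x a - vEmp f u x' a' =
      (u x (empMeas a) - u x' (empMeas a)) + (u x' (empMeas a) - u x' (empMeas a')) +
        (N : ℝ)⁻¹ • ∑ j, (f (x - a j) - f (x' - a' j)) := by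
  rw [sum_sub_distrib, smul_sub, vEmp, vEmp]
  abel

theorem sum_norm_sq_sub_empMeas_le {Lut : ℝ} (hN : N ≠ 0)
    (huemp : ∀ (x : EuclideanSpace ℝ (Fin d)) (a b : Fin N → EuclideanSpace ℝ (Fin d)),
      ‖u x (empMeas a) - u x (empMeas b)‖ ^ 2 ≤ Lut / N * ∑ j, ‖a j - b j‖ ^ 2)
    (x a b : Fin N → EuclideanSpace ℝ (Fin d)) :
    ∑ i, ‖u (x i) (empMeas a) - u (x i) (empMeas b)‖ ^ 2 ≤ Lut * ∑ j, ‖a j - b j‖ ^ 2 := by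
  calc ∑ i, ‖u (x i) (empMeas a) - u (x i) (empMeas b)‖ ^ 2
      ≤ ∑ _i : Fin N, Lut / N * ∑ j, ‖a j - b j‖ ^ 2 := sum_le_sum fun i _ ↦ huemp _ _ _
    _ = Lut * ∑ j, ‖a j - b j‖ ^ 2 := by
        rw [sum_const, card_univ, Fintype.card_fin, nsmul_eq_mul]
        field_simp

theorem sum_inner_vEmp_sub_le {Lf Lu Lut : ℝ} (hN : N ≠ 0)
    (hodd : ∀ z, f (-z) = -f z) (hf : OneSidedLipschitzWith Lf f)
    (hu : ∀ μ, IsProbabilityMeasure μ → OneSidedLipschitzWith Lu (u · μ))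
    (huemp : ∀ (x : EuclideanSpace ℝ (Fin d)) (a b : Fin N → EuclideanSpace ℝ (Fin d)),
      ‖u x (empMeas a) - u x (empMeas b)‖ ^ 2 ≤ Lut / N * ∑ j, ‖a j - b j‖ ^ 2)
    (Y Y' : Fin N → EuclideanSpace ℝ (Fin d)) :
    ∑ i, ⟪Y i - Y' i, vEmp f u (Y i) Y - vEmp f u (Y' i) Y'⟫ ≤
      (2 * max Lf 0 + Lu + Lut / 2 + 1 / 2) * ∑ i, ‖Y i - Y' i‖ ^ 2 := by
  have : NeZero N := ⟨hN⟩
  have hposition := (hu _ (isProbabilityMeasure_empMeas hN Y)).sum_inner_le Y Y'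
  have hyoung := sum_inner_le_half_sum_sq_add_half_sum_sq (fun i ↦ Y i - Y' i)
    fun i ↦ u (Y' i) (empMeas Y) - u (Y' i) (empMeas Y')
  have hmeasure := sum_norm_sq_sub_empMeas_le hN huemp Y' Y Y'
  have hinter := hf.sum_inner_smul_sum_le hodd Y Y'
  rw [Fintype.card_fin] at hinter
  simp only [vEmp_sub_vEmp, inner_add_right, sum_add_distrib]
  linarith

end EmpiricalMeasure

theorem implicit_step_stability_general (d N : ℕ) (hN : 1 ≤ N)
    (f : EuclideanSpace ℝ (Fin d) → EuclideanSpace ℝ (Fin d))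
    (u : EuclideanSpace ℝ (Fin d) → Measure (EuclideanSpace ℝ (Fin d)) →
      EuclideanSpace ℝ (Fin d))
    (Lf Lu Lut : ℝ)
    (hodd : ∀ z : EuclideanSpace ℝ (Fin d), f (-z) = -f z)
    (hf : ∀ z z' : EuclideanSpace ℝ (Fin d), ⟪z - z', f z - f z'⟫ ≤ Lf * ‖z - z'‖ ^ 2)
    (hu : ∀ μ : Measure (EuclideanSpace ℝ (Fin d)), IsProbabilityMeasure μ →
      ∀ x x' : EuclideanSpace ℝ (Fin d), ⟪x - x', u x μ - u x' μ⟫ ≤ Lu * ‖x - x'‖ ^ 2)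
    (huemp : ∀ (x : EuclideanSpace ℝ (Fin d)) (a b : Fin N → EuclideanSpace ℝ (Fin d)),
      ‖u x (empMeas a) - u x (empMeas b)‖ ^ 2 ≤ Lut / N * ∑ j, ‖a j - b j‖ ^ 2)
    (h : ℝ) (hh0 : 0 < h)
    (hh : (4 * max Lf 0 + 2 * Lu + Lut + 1) * h < 1)
    (X Y X' Y' : Fin N → EuclideanSpace ℝ (Fin d))
    (hXY : IsImplicitPair f u h X Y) (hXY' : IsImplicitPair f u h X' Y') :
    ∑ i, ‖Y i - Y' i‖ ^ 2 ≤
      (∑ i, ‖X i - X' i‖ ^ 2) / (1 - (4 * max Lf 0 + 2 * Lu + Lut + 1) * h) := by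
  have henergy : ∑ i, ‖Y i - Y' i‖ ^ 2 = ∑ i, ⟪Y i - Y' i, X i - X' i⟫ +
      h * ∑ i, ⟪Y i - Y' i, vEmp f u (Y i) Y - vEmp f u (Y' i) Y'⟫ := by
    rw [mul_sum, ← sum_add_distrib]
    exact sum_congr rfl fun i _ ↦ norm_sub_sq_eq_of_eq_add_smul (hXY i) (hXY' i)
  have hyoung := sum_inner_le_half_sum_sq_add_half_sum_sq (fun i ↦ Y i - Y' i) (fun i ↦ X i - X' i)
  have hdrift := sum_inner_vEmp_sub_le (by omega) hodd hf hu huemp Y Y'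
  rw [le_div_iff₀ (by linarith)]
  linarith [mul_le_mul_of_nonneg_left hdrift hh0.le]

/-- Lipschitz stability of the implicit Euler step: for two implicit Euler
step pairs `(X, Y)` and `(X', Y')` with `Γ₂·h < 1` where `Γ₂ = 4L_f⁺ + 2L_u + L_ũ + 1`,
`∑ᵢ ‖Yᵢ − Y'ᵢ‖² ≤ ∑ᵢ ‖Xᵢ − X'ᵢ‖² / (1 − Γ₂h)`. -/
theorem implicit_step_stability (d N : ℕ) (hd : 1 ≤ d) (hN : 1 ≤ N)
    (f : EuclideanSpace ℝ (Fin d) → EuclideanSpace ℝ (Fin d))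
    (u : EuclideanSpace ℝ (Fin d) → Measure (EuclideanSpace ℝ (Fin d)) →
      EuclideanSpace ℝ (Fin d))
    (Lf Lu Lut : ℝ) (hLut : 0 ≤ Lut)
    (hodd : ∀ z : EuclideanSpace ℝ (Fin d), f (-z) = -f z)
    (hf : ∀ z z' : EuclideanSpace ℝ (Fin d), ⟪z - z', f z - f z'⟫ ≤ Lf * ‖z - z'‖ ^ 2)
    (hu : ∀ μ : Measure (EuclideanSpace ℝ (Fin d)), IsProbabilityMeasure μ →
      ∀ x x' : EuclideanSpace ℝ (Fin d), ⟪x - x', u x μ - u x' μ⟫ ≤ Lu * ‖x - x'‖ ^ 2)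
    (huemp : ∀ (x : EuclideanSpace ℝ (Fin d)) (a b : Fin N → EuclideanSpace ℝ (Fin d)),
      ‖u x (empMeas a) - u x (empMeas b)‖ ^ 2 ≤ Lut / N * ∑ j, ‖a j - b j‖ ^ 2)
    (h : ℝ) (hh0 : 0 < h)
    (hh : (4 * max Lf 0 + 2 * Lu + Lut + 1) * h < 1)
    (X Y X' Y' : Fin N → EuclideanSpace ℝ (Fin d))
    (hXY : IsImplicitPair f u h X Y) (hXY' : IsImplicitPair f u h X' Y') :
    ∑ i, ‖Y i - Y' i‖ ^ 2 ≤
      (∑ i, ‖X i - X' i‖ ^ 2) / (1 - (4 * max Lf 0 + 2 * Lu + Lut + 1) * h) :=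
  implicit_step_stability_general d N hN f u Lf Lu Lut hodd hf hu huemp h hh0 hh X Y X' Y' hXY hXY'
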